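/- Let N ≥ 2 and 0 < λ < 1, set α = (N−1)/λ − 1, and define u : EuclideanSpace ℝ (Fin N) → ℝ by u(x) = ‖x‖^(−α). Then for every x ≠ 0, the Pucci maximal operator applied to the Hessian of u vanishes: sSup { Matrix.trace (−(A * D²u(x))) : A a real symmetric N×N matrix with λ‖ξ‖² ≤ ξᵀAξ ≤ ‖ξ‖² for all ξ ∈ ℝᴺ } = 0. In other words, u solves P⁺_{λ,1}(D²u) = 0 in the punctured space ℝᴺ \ {0}. -/

import Mathlib

open MeasureTheory Filter Real Matrix
open scoped RealInnerProductSpace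

/-- The Pucci maximal operator `P⁺_{λ,Λ}(M)`. -/
noncomputable def pucciMax (N : ℕ) (lam Lam : ℝ) (M : Matrix (Fin N) (Fin N) ℝ) : ℝ :=
  sSup {t : ℝ | ∃ A : Matrix (Fin N) (Fin N) ℝ, A.IsSymm ∧
    (∀ ξ : Fin N → ℝ, lam * ∑ i, ξ i ^ 2 ≤ ξ ⬝ᵥ A.mulVec ξ ∧
      ξ ⬝ᵥ A.mulVec ξ ≤ Lam * ∑ i, ξ i ^ 2) ∧
    t = Matrix.trace (-(A * M))}

/-- The Hessian matrix of `u` at `x`, in the standard orthonormal basis. -/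
noncomputable def hessianMatrix (N : ℕ) (u : EuclideanSpace ℝ (Fin N) → ℝ)
    (x : EuclideanSpace ℝ (Fin N)) : Matrix (Fin N) (Fin N) ℝ :=
  Matrix.of fun i j => iteratedFDeriv ℝ 2 u x
    ![EuclideanSpace.basisFun (Fin N) ℝ i, EuclideanSpace.basisFun (Fin N) ℝ j]

/-!
Away from the origin the Hessian of `‖x‖ ^ (-α)` is `α ‖x‖ ^ (-α - 4) ((α + 2) x xᵀ - ‖x‖² I)`:
the radial eigenvalue `α (α + 1) ‖x‖ ^ (-α - 2)` is positive and the tangential one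
`-α ‖x‖ ^ (-α - 2)` (multiplicity `N - 1`) is negative. For a matrix `β v vᵀ + d I` of this sign
pattern, `P⁺_{λ,Λ}` puts the weight `λ` on the radial and `Λ` on the tangential directions: the
maximiser is `Λ I - (Λ - λ) v vᵀ / ‖v‖²`, and optimality of it follows from
`vᵀ (Λ I - A) v ≤ ‖v‖² tr (Λ I - A)` for every admissible `A`. The resulting value
`α ‖x‖ ^ (-α - 2) ((N - 1) - λ (α + 1))` vanishes exactly for `α = (N - 1) / λ - 1`.
-/

open scoped Topology

section NormRpow

variable {E : Type*} [NormedAddCommGroup E] [InnerProductSpace ℝ E]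

theorem hasFDerivAt_norm_rpow_of_ne_zero (p : ℝ) {x : E} (hx : x ≠ 0) :
    HasFDerivAt (fun y : E ↦ ‖y‖ ^ p) ((p * ‖x‖ ^ (p - 2)) • innerSL ℝ x) x := by
  have h := (hasStrictFDerivAt_norm_sq x).hasFDerivAt.rpow_const (p := p / 2)
    (Or.inl (by simpa using hx))
  simp_rw [← Real.rpow_natCast_mul (norm_nonneg _), ← Nat.cast_smul_eq_nsmul ℝ, smul_smul] at h
  convert h using 2 <;> ring_nf

theorem fderiv_fderiv_norm_rpow_apply (p : ℝ) {x : E} (hx : x ≠ 0) (v w : E) :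
    fderiv ℝ (fderiv ℝ fun y : E ↦ ‖y‖ ^ p) x v w =
      p * (p - 2) * ‖x‖ ^ (p - 4) * ⟪x, v⟫ * ⟪x, w⟫ + p * ‖x‖ ^ (p - 2) * ⟪v, w⟫ := by
  have hfderiv : fderiv ℝ (fun y : E ↦ ‖y‖ ^ p) =ᶠ[𝓝 x]
      fun y ↦ (p * ‖y‖ ^ (p - 2)) • innerSL ℝ y := by
    filter_upwards [isOpen_ne.mem_nhds hx] with y hy
    exact (hasFDerivAt_norm_rpow_of_ne_zero p hy).fderiv
  have h := (((hasFDerivAt_norm_rpow_of_ne_zero (p - 2) hx).const_mul p).smul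
    (innerSL ℝ (E := E)).hasFDerivAt).congr_of_eventuallyEq hfderiv
  rw [h.fderiv]
  show p * ‖x‖ ^ (p - 2) * ⟪v, w⟫ + p * ((p - 2) * ‖x‖ ^ (p - 2 - 2) * ⟪x, v⟫) * ⟪x, w⟫ = _
  rw [show p - 2 - 2 = p - 4 by ring]
  ring

end NormRpow

namespace Matrix

variable {n : Type*} [Fintype n]

theorem PosSemidef.dotProduct_mulVec_le_dotProduct_self_mul_trace [DecidableEq n]
    {B : Matrix n n ℝ} (hB : B.PosSemidef) (v : n → ℝ) : v ⬝ᵥ B *ᵥ v ≤ (v ⬝ᵥ v) * B.trace := by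
  rcases eq_or_ne v 0 with rfl | hv
  · simp
  have hQ : 0 < v ⬝ᵥ v := by simpa using dotProduct_self_star_pos_iff.mpr hv
  -- `R` is `v ⬝ᵥ v` times the orthogonal projection onto `vᗮ`, and `tr (R B R) ≥ 0`.
  set R : Matrix n n ℝ := (v ⬝ᵥ v) • 1 - vecMulVec v v
  have hRR : R * R = (v ⬝ᵥ v) • R := by
    simp only [R, sub_mul, mul_sub, vecMulVec_mul_vecMulVec, smul_mul, Matrix.mul_smul, one_mul,
      mul_one, vecMulVec_smul]
    module
  have hR : Rᴴ = R := by
    simp [R, transpose_vecMulVec]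
  have hnonneg := (hB.conjTranspose_mul_mul_same R).trace_nonneg
  rw [hR, trace_mul_cycle, hRR, smul_mul, trace_smul, smul_eq_mul] at hnonneg
  have htrace : (R * B).trace = (v ⬝ᵥ v) * B.trace - v ⬝ᵥ B *ᵥ v := by
    rw [sub_mul, trace_sub, smul_mul, one_mul, trace_smul, smul_eq_mul, trace_mul_comm,
      mul_vecMulVec, trace_vecMulVec, dotProduct_comm (B *ᵥ v)]
  nlinarith [htrace]

theorem dotProduct_self_eq_sum_sq (v : n → ℝ) : v ⬝ᵥ v = ∑ i, v i ^ 2 := by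
  simp [dotProduct, sq]

theorem dotProduct_vecMulVec_self_mulVec (v ξ : n → ℝ) :
    ξ ⬝ᵥ vecMulVec v v *ᵥ ξ = (v ⬝ᵥ ξ) ^ 2 := by
  simp [vecMulVec_mulVec, sq, dotProduct_comm ξ v]

theorem trace_neg_mul_smul_vecMulVec_add_smul_one [DecidableEq n] (A : Matrix n n ℝ) (β d : ℝ)
    (v : n → ℝ) :
    trace (-(A * (β • vecMulVec v v + d • 1))) = -(β * (v ⬝ᵥ A *ᵥ v) + d * A.trace) := by
  rw [trace_neg, Matrix.mul_add, trace_add, Matrix.mul_smul, Matrix.mul_smul, mul_one, trace_smul,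
    trace_smul, mul_vecMulVec, trace_vecMulVec, dotProduct_comm, smul_eq_mul, smul_eq_mul]

end Matrix

open Matrix in
theorem pucciMax_smul_vecMulVec_add_smul_one {N : ℕ} {lam Lam β d : ℝ} (hlam : lam ≤ Lam)
    {v : Fin N → ℝ} (hv : v ≠ 0) (hd : d ≤ 0) (hβd : 0 ≤ β * (v ⬝ᵥ v) + d) :
    pucciMax N lam Lam (β • vecMulVec v v + d • 1) =
      -lam * (β * (v ⬝ᵥ v) + d) - Lam * (N - 1) * d := by
  have hQ : 0 < v ⬝ᵥ v := by simpa using dotProduct_self_star_pos_iff.mpr hv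
  refine IsGreatest.csSup_eq ⟨?_, ?_⟩
  · -- `A₀` has eigenvalue `lam` in the direction `v` and `Lam` on `vᗮ`.
    set c := (Lam - lam) / (v ⬝ᵥ v)
    have hc : 0 ≤ c := div_nonneg (sub_nonneg.mpr hlam) hQ.le
    have hcQ : c * (v ⬝ᵥ v) = Lam - lam := div_mul_cancel₀ _ hQ.ne'
    set A₀ : Matrix (Fin N) (Fin N) ℝ := Lam • 1 - c • vecMulVec v v
    have hquad : ∀ ξ, ξ ⬝ᵥ A₀ *ᵥ ξ = Lam * (ξ ⬝ᵥ ξ) - c * (v ⬝ᵥ ξ) ^ 2 := by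
      intro ξ
      rw [sub_mulVec, smul_mulVec, one_mulVec, dotProduct_sub, smul_mulVec, dotProduct_smul,
        dotProduct_smul, dotProduct_vecMulVec_self_mulVec, smul_eq_mul, smul_eq_mul]
    refine ⟨A₀, ?_, fun ξ ↦ ?_, ?_⟩
    · simp [A₀, IsSymm, transpose_vecMulVec]
    · have hcs :=
        (posSemidef_vecMulVec_self_star v).dotProduct_mulVec_le_dotProduct_self_mul_trace ξ
      simp only [star_trivial, trace_vecMulVec, dotProduct_vecMulVec_self_mulVec] at hcs
      rw [hquad, ← dotProduct_self_eq_sum_sq]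
      constructor
      · linear_combination mul_le_mul_of_nonneg_left hcs hc + (ξ ⬝ᵥ ξ) * hcQ
      · nlinarith [mul_nonneg hc (sq_nonneg (v ⬝ᵥ ξ))]
    · rw [trace_neg_mul_smul_vecMulVec_add_smul_one, hquad, trace_sub, trace_smul, trace_one,
        trace_smul, trace_vecMulVec, smul_eq_mul, smul_eq_mul, Fintype.card_fin]
      linear_combination (-(β * (v ⬝ᵥ v) + d)) * hcQ
  · rintro _ ⟨A, hA, hAξ, rfl⟩
    have hlow := (hAξ v).1
    have hpsd : (Lam • 1 - A).PosSemidef := by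
      refine .of_dotProduct_mulVec_nonneg ?_ fun ξ ↦ ?_
      · simp [IsHermitian, conjTranspose_eq_transpose_of_trivial, hA.eq]
      · simpa [sub_mulVec, smul_mulVec, dotProduct_sub, dotProduct_self_eq_sum_sq] using (hAξ ξ).2
    have hup := hpsd.dotProduct_mulVec_le_dotProduct_self_mul_trace v
    rw [← dotProduct_self_eq_sum_sq] at hlow
    rw [sub_mulVec, smul_mulVec, one_mulVec, dotProduct_sub, dotProduct_smul, trace_sub,
      trace_smul, trace_one, Fintype.card_fin, smul_eq_mul, smul_eq_mul] at hup
    rw [trace_neg_mul_smul_vecMulVec_add_smul_one]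
    refine le_of_mul_le_mul_left ?_ hQ
    nlinarith [mul_le_mul_of_nonpos_left hup hd, mul_le_mul_of_nonneg_left hlow hβd]

theorem hessianMatrix_norm_rpow {N : ℕ} (p : ℝ) {x : EuclideanSpace ℝ (Fin N)} (hx : x ≠ 0) :
    hessianMatrix N (fun y ↦ ‖y‖ ^ p) x =
      (p * (p - 2) * ‖x‖ ^ (p - 4)) • vecMulVec x x + (p * ‖x‖ ^ (p - 2)) • 1 := by
  ext i j
  simp [hessianMatrix, iteratedFDeriv_two_apply, fderiv_fderiv_norm_rpow_apply p hx, one_apply,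
    EuclideanSpace.inner_single_right, vecMulVec_apply, mul_assoc, eq_comm (a := j)]

/-- For `N ≥ 2`, `0 < λ < 1` and `α = (N-1)/λ - 1`, the function `u(x) = ‖x‖^(-α)` solves
`P⁺_{λ,1}(D²u) = 0` in the punctured space `ℝᴺ \ {0}`. -/
theorem pucci_fundamental_solution (N : ℕ) (hN : 2 ≤ N) (lam : ℝ)
    (hlam0 : 0 < lam) (hlam1 : lam < 1) (α : ℝ) (hα : α = ((N : ℝ) - 1) / lam - 1)
    (u : EuclideanSpace ℝ (Fin N) → ℝ)
    (hu : ∀ x : EuclideanSpace ℝ (Fin N), u x = ‖x‖ ^ (-α)) :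
    ∀ x : EuclideanSpace ℝ (Fin N), x ≠ 0 →
      pucciMax N lam 1 (hessianMatrix N u x) = 0 := by
  intro x hx
  obtain rfl : u = fun y ↦ ‖y‖ ^ (-α) := funext hu
  have hα_nonneg : 0 ≤ α := by
    have : (2 : ℝ) ≤ N := by exact_mod_cast hN
    rw [hα, sub_nonneg, one_le_div hlam0]
    linarith
  have hαlam : lam * (α + 1) = N - 1 := by
    rw [hα]
    field_simp
    ring
  have hr : 0 < ‖x‖ := norm_pos_iff.mpr hx
  have hsQ : 0 < ‖x‖ ^ (-α - 4) * ‖x‖ ^ 2 := by positivity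
  have hQ : x.ofLp ⬝ᵥ x.ofLp = ‖x‖ ^ 2 := by
    rw [← real_inner_self_eq_norm_sq, EuclideanSpace.inner_eq_star_dotProduct, star_trivial]
  have hpow : ‖x‖ ^ (-α - 2) = ‖x‖ ^ (-α - 4) * ‖x‖ ^ 2 := by
    rw [← rpow_natCast, ← rpow_add hr]
    congr 1
    push_cast
    ring
  rw [hessianMatrix_norm_rpow (-α) hx, pucciMax_smul_vecMulVec_add_smul_one hlam1.le
    (by simpa using hx), hQ, hpow]
  · linear_combination (-α * (‖x‖ ^ (-α - 4) * ‖x‖ ^ 2)) * hαlam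
  · rw [hpow]
    nlinarith
  · rw [hQ, hpow]
    nlinarith [mul_nonneg (mul_nonneg hα_nonneg (by linarith : 0 ≤ α + 1)) hsQ.le]
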